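/- arXiv:2004.05102 — 6 statements merged into one kernel-verified Lean document; each statement's English description precedes it below -/
import Mathlib

section
/- Let K₀ be an n×n real symmetric positive semidefinite matrix and M ≥ 1 an integer. Suppose that for each m = 0, …, M−1 we are given an r_m×n real matrix Φ_m with rank(Φ_m) = r_m and R(Φ_mᵀ) ∩ R(K_m)^⊥ = {0}, where the matrices K_m are defined recursively by K_{m+1} = K_m − K_m Φ_mᵀ (Φ_m K_m Φ_mᵀ)⁻¹ Φ_m K_m. Then for every m = 0, …, M−1 the matrix Φ_m K_m Φ_mᵀ is positive definite (so the recursion is well defined), and for every m = 0, …, M the matrix K_m is symmetric positive semidefinite. -/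
/-!
By induction on `m`. If `K_m ⪰ 0` and `v ≠ 0`, then `x = Φ_mᵀ v ≠ 0` by full row rank, and
`xᵀ K_m x = 0` would force `K_m x = 0`, i.e. `x ⊥ R(K_m)`; hence `Φ_m K_m Φ_mᵀ ≻ 0`. Then `K_{m+1}`
is the Schur complement of `Φ_m K_m Φ_mᵀ` in the positive semidefinite block matrix
`[Φ_m; 1] K_m [Φ_m; 1]ᵀ`, so it is positive semidefinite.
-/

open Matrix

namespace Matrix

variable {ι κ : Type*} [Fintype ι] [Fintype κ]

omit [Fintype ι] in
theorem mulVec_injective_of_rank_eq_card {K : Type*} [Field K] (A : Matrix ι κ K)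
    (h : A.rank = Fintype.card κ) : Function.Injective A.mulVec := by
  have hdim := LinearMap.finrank_range_add_finrank_ker A.mulVecLin
  rwa [← Matrix.rank, h, Module.finrank_fintype_fun_eq_card, Nat.add_eq_left,
    Submodule.finrank_eq_zero, LinearMap.ker_eq_bot] at hdim

omit [Fintype ι] in
theorem PosSemidef.dotProduct_mulVec_eq_zero_of_mulVec_eq_zero {K : Matrix κ κ ℝ}
    (hK : K.PosSemidef) {x : κ → ℝ} (hx : K *ᵥ x = 0) (y : κ → ℝ) : x ⬝ᵥ K *ᵥ y = 0 := by
  rw [dotProduct_mulVec, ← mulVec_transpose, ← conjTranspose_eq_transpose_of_trivial, hK.1.eq, hx,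
    zero_dotProduct]

theorem PosSemidef.posDef_mul_mul_transpose {Φ : Matrix ι κ ℝ} {K : Matrix κ κ ℝ}
    (hK : K.PosSemidef) (hΦ : Φ.rank = Fintype.card ι)
    (horth : ∀ x : κ → ℝ, x ∈ LinearMap.range Φᵀ.mulVecLin →
      (∀ y : κ → ℝ, y ∈ LinearMap.range K.mulVecLin → x ⬝ᵥ y = 0) → x = 0) :
    (Φ * K * Φᵀ).PosDef := by
  have hinj : Function.Injective Φᵀ.mulVec :=
    Φᵀ.mulVec_injective_of_rank_eq_card (by rw [rank_transpose, hΦ])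
  have hpsd : (Φ * K * Φᵀ).PosSemidef := by
    simpa using hK.mul_mul_conjTranspose_same Φ
  refine .of_dotProduct_mulVec_pos hpsd.1 fun v hv => ?_
  set x := Φᵀ *ᵥ v
  have hquad : v ⬝ᵥ (Φ * K * Φᵀ) *ᵥ v = x ⬝ᵥ K *ᵥ x := by
    rw [← mulVec_mulVec, ← mulVec_mulVec, dotProduct_mulVec v Φ, ← mulVec_transpose]
  have hx : x ≠ 0 := fun h => hv (hinj (h.trans (mulVec_zero _).symm))
  rw [star_trivial, hquad]
  refine (hK.dotProduct_mulVec_nonneg x).lt_of_ne' fun h0 => hx ?_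
  have hKx : K *ᵥ x = 0 := (hK.dotProduct_mulVec_zero_iff x).mp (by rwa [star_trivial])
  exact horth x ⟨v, rfl⟩ fun _ ⟨z, hz⟩ => hz ▸ hK.dotProduct_mulVec_eq_zero_of_mulVec_eq_zero hKx z

theorem PosSemidef.sub_mul_mul_inv_mul {R : Type*} [Field R] [PartialOrder R] [StarRing R]
    [StarOrderedRing R] [DecidableEq ι] [DecidableEq κ] {Φ : Matrix ι κ R} {K : Matrix κ κ R}
    (hK : K.PosSemidef) (hB : (Φ * K * Φᴴ).PosDef) :
    (K - K * Φᴴ * (Φ * K * Φᴴ)⁻¹ * (Φ * K)).PosSemidef := by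
  have hblock : fromBlocks (Φ * K * Φᴴ) (Φ * K) (Φ * K)ᴴ K
      = fromRows Φ 1 * K * (fromRows Φ 1)ᴴ := by
    simp [conjTranspose_fromRows_eq_fromCols_conjTranspose, fromRows_mul, conjTranspose_mul,
      hK.1.eq]
  have : Invertible (Φ * K * Φᴴ) := hB.isUnit.invertible
  have hschur := (hB.fromBlocks₁₁ (Φ * K) K).mp (hblock ▸ hK.mul_mul_conjTranspose_same _)
  simpa [conjTranspose_mul, hK.1.eq, Matrix.mul_assoc] using hschur

end Matrix

theorem mralp_residuals_posSemidef_general {n : ℕ} (M : ℕ) (r : ℕ → ℕ)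
    (Φ : (m : ℕ) → Matrix (Fin (r m)) (Fin n) ℝ)
    (K : ℕ → Matrix (Fin n) (Fin n) ℝ)
    (hK0 : (K 0).PosSemidef)
    (hrank : ∀ m < M, (Φ m).rank = r m)
    (horth : ∀ m < M, ∀ x : Fin n → ℝ,
      x ∈ LinearMap.range ((Φ m)ᵀ).mulVecLin →
      (∀ y : Fin n → ℝ, y ∈ LinearMap.range (K m).mulVecLin → x ⬝ᵥ y = 0) →
      x = 0)
    (hrec : ∀ m < M,
      K (m + 1) = K m - K m * (Φ m)ᵀ * (Φ m * K m * (Φ m)ᵀ)⁻¹ * (Φ m * K m)) :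
    (∀ m < M, (Φ m * K m * (Φ m)ᵀ).PosDef) ∧ (∀ m ≤ M, (K m).PosSemidef) := by
  have hB : ∀ m < M, (K m).PosSemidef → (Φ m * K m * (Φ m)ᵀ).PosDef := fun m hm hKm =>
    hKm.posDef_mul_mul_transpose (by rw [hrank m hm, Fintype.card_fin]) (horth m hm)
  have hK : ∀ m ≤ M, (K m).PosSemidef := by
    intro m hm
    induction m with
    | zero => exact hK0
    | succ m ih =>
      have hKm := ih (Nat.le_of_succ_le hm)
      have hBm := hB m hm hKm
      rw [← conjTranspose_eq_transpose_of_trivial] at hBm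
      simpa only [hrec m hm, conjTranspose_eq_transpose_of_trivial] using
        hKm.sub_mul_mul_inv_mul hBm
  exact ⟨fun m hm => hB m hm (hK m hm.le), hK⟩

/-- Iterated linear-projection residuals: if K₀ is symmetric positive semidefinite
and for each m < M the matrix Φ_m has full row rank r_m with
R(Φ_mᵀ) ∩ R(K_m)^⊥ = {0}, where K_{m+1} = K_m − K_m Φ_mᵀ (Φ_m K_m Φ_mᵀ)⁻¹ Φ_m K_m,
then each Φ_m K_m Φ_mᵀ (m < M) is positive definite and each K_m (m ≤ M) is
symmetric positive semidefinite. -/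
theorem mralp_residuals_posSemidef {n : ℕ} (M : ℕ) (hM : 1 ≤ M) (r : ℕ → ℕ)
    (Φ : (m : ℕ) → Matrix (Fin (r m)) (Fin n) ℝ)
    (K : ℕ → Matrix (Fin n) (Fin n) ℝ)
    (hK0 : (K 0).PosSemidef)
    (hrank : ∀ m < M, (Φ m).rank = r m)
    (horth : ∀ m < M, ∀ x : Fin n → ℝ,
      x ∈ LinearMap.range ((Φ m)ᵀ).mulVecLin →
      (∀ y : Fin n → ℝ, y ∈ LinearMap.range (K m).mulVecLin → x ⬝ᵥ y = 0) →
      x = 0)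
    (hrec : ∀ m < M,
      K (m + 1) = K m - K m * (Φ m)ᵀ * (Φ m * K m * (Φ m)ᵀ)⁻¹ * (Φ m * K m)) :
    (∀ m < M, (Φ m * K m * (Φ m)ᵀ).PosDef) ∧ (∀ m ≤ M, (K m).PosSemidef) :=
  mralp_residuals_posSemidef_general M r Φ K hK0 hrank horth hrec
end

section
/- Let A be an n×n real symmetric matrix, B an n×q real matrix, and K a q×q real symmetric matrix such that the (n+q)×(n+q) block matrix [[A, B], [Bᵀ, K]] is positive semidefinite. Let Φ be an r×q real matrix such that Φ K Φᵀ is positive definite, and let T be an n×n real positive semidefinite matrix. Then the matrix B Φᵀ (Φ K Φᵀ)⁻¹ Φ Bᵀ + (A − B Φᵀ (Φ K Φᵀ)⁻¹ Φ Bᵀ) ∘ T, where ∘ denotes the Hadamard (entrywise) product, is positive semidefinite. -/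
/-! Conjugating the block matrix by `diag(1, Φ)` keeps it positive semidefinite, so its Schur
complement `A - BΦᴴ(ΦKΦᴴ)⁻¹ΦBᴴ` with respect to the positive definite block `ΦKΦᴴ` is positive
semidefinite. The projection term is a congruence of `(ΦKΦᴴ)⁻¹`, and the Schur product theorem
makes the tapered residual positive semidefinite. -/

open Matrix
open scoped ComplexOrder

namespace Matrix

variable {𝕜 : Type*} [RCLike 𝕜] {m p s : Type*} [Fintype m] [Fintype p] [Fintype s]

theorem PosSemidef.fromBlocks_mul_conjTranspose [DecidableEq m]
    {A : Matrix m m 𝕜} {B : Matrix m p 𝕜} {K : Matrix p p 𝕜}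
    (h : (fromBlocks A B Bᴴ K).PosSemidef) (Φ : Matrix s p 𝕜) :
    (fromBlocks A (B * Φᴴ) (Φ * Bᴴ) (Φ * K * Φᴴ)).PosSemidef := by
  convert h.mul_mul_conjTranspose_same (fromBlocks (1 : Matrix m m 𝕜) 0 0 Φ) using 1
  simp [fromBlocks_conjTranspose, fromBlocks_multiply, Matrix.mul_assoc]

theorem PosSemidef.sub_mul_inv_mul_of_fromBlocks [DecidableEq m] [DecidableEq s]
    {A : Matrix m m 𝕜} {B : Matrix m p 𝕜} {K : Matrix p p 𝕜} {Φ : Matrix s p 𝕜}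
    (h : (fromBlocks A B Bᴴ K).PosSemidef) (hΦK : (Φ * K * Φᴴ).PosDef) :
    (A - B * Φᴴ * (Φ * K * Φᴴ)⁻¹ * (Φ * Bᴴ)).PosSemidef := by
  have : Invertible (Φ * K * Φᴴ) := hΦK.isUnit.invertible
  have hBΦ : (B * Φᴴ)ᴴ = Φ * Bᴴ := by simp [conjTranspose_mul]
  have hcong := h.fromBlocks_mul_conjTranspose Φ
  rwa [← hBΦ, PosDef.fromBlocks₂₂ A (B * Φᴴ) hΦK, hBΦ] at hcong

theorem PosDef.mul_inv_mul_conjTranspose_posSemidef [DecidableEq s]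
    {K : Matrix p p 𝕜} {Φ : Matrix s p 𝕜} (hΦK : (Φ * K * Φᴴ).PosDef) (B : Matrix m p 𝕜) :
    (B * Φᴴ * (Φ * K * Φᴴ)⁻¹ * (Φ * Bᴴ)).PosSemidef := by
  simpa [conjTranspose_mul, Matrix.mul_assoc] using
    hΦK.inv.posSemidef.mul_mul_conjTranspose_same (B * Φᴴ)

theorem PosSemidef.add_hadamard_sub_mul_inv_mul [DecidableEq m] [DecidableEq s]
    {A T : Matrix m m 𝕜} {B : Matrix m p 𝕜} {K : Matrix p p 𝕜} {Φ : Matrix s p 𝕜}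
    (h : (fromBlocks A B Bᴴ K).PosSemidef) (hΦK : (Φ * K * Φᴴ).PosDef) (hT : T.PosSemidef) :
    (B * Φᴴ * (Φ * K * Φᴴ)⁻¹ * (Φ * Bᴴ) +
      (A - B * Φᴴ * (Φ * K * Φᴴ)⁻¹ * (Φ * Bᴴ)) ⊙ T).PosSemidef :=
  (hΦK.mul_inv_mul_conjTranspose_posSemidef B).add
    ((h.sub_mul_inv_mul_of_fromBlocks hΦK).hadamard hT)

end Matrix

theorem mlp_cov_posSemidef_general {n q r : ℕ}
    (A : Matrix (Fin n) (Fin n) ℝ) (B : Matrix (Fin n) (Fin q) ℝ)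
    (K : Matrix (Fin q) (Fin q) ℝ) (Φ : Matrix (Fin r) (Fin q) ℝ)
    (T : Matrix (Fin n) (Fin n) ℝ)
    (hblock : (Matrix.fromBlocks A B Bᵀ K).PosSemidef)
    (hΦK : (Φ * K * Φᵀ).PosDef) (hT : T.PosSemidef) :
    (B * Φᵀ * (Φ * K * Φᵀ)⁻¹ * (Φ * Bᵀ) +
      Matrix.hadamard (A - B * Φᵀ * (Φ * K * Φᵀ)⁻¹ * (Φ * Bᵀ)) T).PosSemidef := by
  simp only [← conjTranspose_eq_transpose_of_trivial] at hblock hΦK ⊢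
  exact hblock.add_hadamard_sub_mul_inv_mul hΦK hT

/-- Modified linear projection covariance: if [[A, B], [Bᵀ, K]] (with A, K
symmetric) is positive semidefinite, Φ K Φᵀ is positive definite and T is
positive semidefinite, then
B Φᵀ (Φ K Φᵀ)⁻¹ Φ Bᵀ + (A − B Φᵀ (Φ K Φᵀ)⁻¹ Φ Bᵀ) ∘ T is positive
semidefinite, where ∘ is the Hadamard product. -/
theorem mlp_cov_posSemidef {n q r : ℕ}
    (A : Matrix (Fin n) (Fin n) ℝ) (B : Matrix (Fin n) (Fin q) ℝ)
    (K : Matrix (Fin q) (Fin q) ℝ) (Φ : Matrix (Fin r) (Fin q) ℝ)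
    (T : Matrix (Fin n) (Fin n) ℝ)
    (hA : A.IsHermitian) (hK : K.IsHermitian)
    (hblock : (Matrix.fromBlocks A B Bᵀ K).PosSemidef)
    (hΦK : (Φ * K * Φᵀ).PosDef) (hT : T.PosSemidef) :
    (B * Φᵀ * (Φ * K * Φᵀ)⁻¹ * (Φ * Bᵀ) +
      Matrix.hadamard (A - B * Φᵀ * (Φ * K * Φᵀ)⁻¹ * (Φ * Bᵀ)) T).PosSemidef :=
  mlp_cov_posSemidef_general A B K Φ T hblock hΦK hT
end

section
/- Let K₀ be an n×n real symmetric positive semidefinite matrix, M ≥ 1 an integer, and for m = 0, …, M−1 let Φ_m be an r_m×n real matrix with rank(Φ_m) = r_m and R(Φ_mᵀ) ∩ R(K_m)^⊥ = {0}, where K_{m+1} = K_m − K_m Φ_mᵀ (Φ_m K_m Φ_mᵀ)⁻¹ Φ_m K_m. Let T be an n×n real matrix whose diagonal entries are all equal to 1. Then the matrix Σ_{m=0}^{M−1} K_m Φ_mᵀ (Φ_m K_m Φ_mᵀ)⁻¹ Φ_m K_m + K_M ∘ T, where ∘ denotes the Hadamard (entrywise) product, has the same diagonal entries as K₀; that is,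 the approximation completely recovers the variances of the original process. -/
open Matrix

/-- The M-RA-lp approximation completely recovers the variances: with the
iterated linear-projection residuals K_{m+1} = K_m − K_m Φ_mᵀ (Φ_m K_m Φ_mᵀ)⁻¹ Φ_m K_m
and a taper matrix T with unit diagonal, the matrix
Σ_{m<M} K_m Φ_mᵀ (Φ_m K_m Φ_mᵀ)⁻¹ Φ_m K_m + K_M ∘ T has the same diagonal as K₀. -/
theorem mralp_recovers_variances {n : ℕ} (M : ℕ) (hM : 1 ≤ M) (r : ℕ → ℕ)
    (Φ : (m : ℕ) → Matrix (Fin (r m)) (Fin n) ℝ)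
    (K : ℕ → Matrix (Fin n) (Fin n) ℝ)
    (T : Matrix (Fin n) (Fin n) ℝ)
    (hK0 : (K 0).PosSemidef)
    (hrank : ∀ m < M, (Φ m).rank = r m)
    (horth : ∀ m < M, ∀ x : Fin n → ℝ,
      x ∈ LinearMap.range ((Φ m)ᵀ).mulVecLin →
      (∀ y : Fin n → ℝ, y ∈ LinearMap.range (K m).mulVecLin → x ⬝ᵥ y = 0) →
      x = 0)
    (hrec : ∀ m < M,
      K (m + 1) = K m - K m * (Φ m)ᵀ * (Φ m * K m * (Φ m)ᵀ)⁻¹ * (Φ m * K m))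
    (hT : ∀ i, T i i = 1) :
    ∀ i, (∑ m ∈ Finset.range M,
        K m * (Φ m)ᵀ * (Φ m * K m * (Φ m)ᵀ)⁻¹ * (Φ m * K m) +
        Matrix.hadamard (K M) T) i i = K 0 i i := by
  intro i
  have hsum : (∑ m ∈ Finset.range M,
      K m * (Φ m)ᵀ * (Φ m * K m * (Φ m)ᵀ)⁻¹ * (Φ m * K m)) = K 0 - K M := by
    rw [Finset.sum_congr rfl (fun m hm => ?_), Finset.sum_range_sub' K]
    rw [hrec m (Finset.mem_range.mp hm), sub_sub_cancel]
  rw [Matrix.add_apply, hsum, Matrix.sub_apply, Matrix.hadamard_apply, hT i]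
  ring
end

section
/- Let V be an n×n real positive definite matrix, K̂ an r×r real positive definite matrix, B an n×q real matrix, and Φ an r×q real matrix; set Σ = B Φᵀ K̂ Φ Bᵀ + V and K̃ = (K̂⁻¹ + Φ Bᵀ V⁻¹ B Φᵀ)⁻¹. Let P be a p×q matrix, L̃ a p×n matrix, Σ' an invertible n'×n' matrix, L' a p×n' matrix, B' an n'×q matrix, z ∈ ℝⁿ, and z' ∈ ℝⁿ', and assume L̃ V⁻¹ B = L' Σ'⁻¹ B' and L̃ V⁻¹ z = L' Σ'⁻¹ z'. Define L = P Φᵀ K̂ Φ Bᵀ + L̃, B̃ = P − L' Σ'⁻¹ B', and ω = Bᵀ V⁻¹ z. Then L Σ⁻¹ z = L' Σ'⁻¹ z' + B̃ Φᵀ K̃ Φ ω. -/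
open Matrix

/-- One-step recursion for the predictive mean in the M-RA-lp: with
Σ = B Φᵀ K̂ Φ Bᵀ + V, K̃ = (K̂⁻¹ + Φ Bᵀ V⁻¹ B Φᵀ)⁻¹, Sig' invertible,
L̃ V⁻¹ B = L' Sig'⁻¹ B' and L̃ V⁻¹ z = L' Sig'⁻¹ z', setting
L = P Φᵀ K̂ Φ Bᵀ + L̃, B̃ = P − L' Sig'⁻¹ B' and ω = Bᵀ V⁻¹ z, one has
L Σ⁻¹ z = L' Sig'⁻¹ z' + B̃ Φᵀ K̃ Φ ω. -/
theorem predictive_mean_recursion {n q r p n' : ℕ}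
    (V : Matrix (Fin n) (Fin n) ℝ) (Khat : Matrix (Fin r) (Fin r) ℝ)
    (B : Matrix (Fin n) (Fin q) ℝ) (Φ : Matrix (Fin r) (Fin q) ℝ)
    (hV : V.PosDef) (hK : Khat.PosDef)
    (P : Matrix (Fin p) (Fin q) ℝ) (Lt : Matrix (Fin p) (Fin n) ℝ)
    (Sig' : Matrix (Fin n') (Fin n') ℝ) (hSig' : IsUnit Sig')
    (L' : Matrix (Fin p) (Fin n') ℝ) (B' : Matrix (Fin n') (Fin q) ℝ)
    (z : Fin n → ℝ) (z' : Fin n' → ℝ)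
    (hLB : Lt * V⁻¹ * B = L' * Sig'⁻¹ * B')
    (hLz : (Lt * V⁻¹) *ᵥ z = (L' * Sig'⁻¹) *ᵥ z') :
    (P * Φᵀ * Khat * (Φ * Bᵀ) + Lt) *ᵥ
        ((B * Φᵀ * Khat * (Φ * Bᵀ) + V)⁻¹ *ᵥ z) =
      (L' * Sig'⁻¹) *ᵥ z' +
        ((P - L' * Sig'⁻¹ * B') * Φᵀ *
            (Khat⁻¹ + Φ * Bᵀ * V⁻¹ * (B * Φᵀ))⁻¹ * Φ) *ᵥ
          (Bᵀ *ᵥ (V⁻¹ *ᵥ z)) := by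
  set U : Matrix (Fin n) (Fin r) ℝ := B * Φᵀ with hU
  set W : Matrix (Fin r) (Fin n) ℝ := Φ * Bᵀ with hW
  have hWU : W = Uᵀ := by rw [hU, hW, transpose_mul, transpose_transpose]
  set Sig : Matrix (Fin n) (Fin n) ℝ := U * Khat * W + V with hSigdef
  set Kt : Matrix (Fin r) (Fin r) ℝ := (Khat⁻¹ + W * V⁻¹ * U)⁻¹ with hKtdef
  -- Σ is posdef hence invertible
  have hSig : Sig.PosDef := by
    have h1 : (U * Khat * Uᴴ).PosSemidef := hK.posSemidef.mul_mul_conjTranspose_same U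
    rw [hSigdef, hWU]
    exact Matrix.PosDef.posSemidef_add (by simpa using h1) hV
  -- K̃⁻¹ is posdef hence invertible
  have hS : (W * V⁻¹ * U).PosSemidef := by
    have h1 : (Uᴴ * V⁻¹ * U).PosSemidef := hV.inv.posSemidef.conjTranspose_mul_mul_same U
    rw [hWU]; simpa using h1
  have hKti : (Khat⁻¹ + W * V⁻¹ * U).PosDef := (hK.inv).add_posSemidef hS
  have hKt1 : Kt * (Khat⁻¹ + W * V⁻¹ * U) = 1 :=
    nonsing_inv_mul _ (isUnit_iff_isUnit_det _ |>.mp hKti.isUnit)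
  have hKK : Khat⁻¹ * Khat = 1 :=
    nonsing_inv_mul _ (isUnit_iff_isUnit_det _ |>.mp hK.isUnit)
  set M : Matrix (Fin p) (Fin n) ℝ :=
    (P - L' * Sig'⁻¹ * B') * Φᵀ * Kt * W * V⁻¹ + Lt * V⁻¹ with hMdef
  have hVV : V⁻¹ * V = 1 := nonsing_inv_mul _ (isUnit_iff_isUnit_det _ |>.mp hV.isUnit)
  have hLVU : Lt * V⁻¹ * U = L' * Sig'⁻¹ * B' * Φᵀ := by
    rw [hU, ← Matrix.mul_assoc, hLB]
  -- the key identity: L = M * Σ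
  have e3 : Khat⁻¹ * (Khat * W) = W := by
    rw [← Matrix.mul_assoc, hKK, Matrix.one_mul]
  have hL : M * Sig = P * Φᵀ * Khat * W + Lt := by
    have e1 : Kt * (W * V⁻¹ * U) = 1 - Kt * Khat⁻¹ := by
      rw [← hKt1, Matrix.mul_add]; abel
    have e2 : Kt * Khat⁻¹ * Khat = Kt := by
      rw [Matrix.mul_assoc, hKK, Matrix.mul_one]
    calc M * Sig
        = (P - L' * Sig'⁻¹ * B') * Φᵀ * (Kt * (W * V⁻¹ * U)) * Khat * W
          + (P - L' * Sig'⁻¹ * B') * Φᵀ * Kt * W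
          + (Lt * V⁻¹ * U) * Khat * W + Lt := by
          rw [hMdef, hSigdef]
          simp only [Matrix.mul_add, Matrix.add_mul, Matrix.mul_assoc, hVV, Matrix.mul_one]
          noncomm_ring
      _ = (P - L' * Sig'⁻¹ * B') * Φᵀ * Khat * W + (L' * Sig'⁻¹ * B') * Φᵀ * Khat * W + Lt := by
          rw [e1, hLVU]
          simp only [Matrix.mul_sub, Matrix.sub_mul, Matrix.mul_one, Matrix.mul_assoc, e3]
          abel
      _ = P * Φᵀ * Khat * W + Lt := by
          simp only [Matrix.sub_mul, Matrix.mul_assoc]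
          abel
  have hLS : (P * Φᵀ * Khat * W + Lt) * Sig⁻¹ = M := by
    rw [← hL, Matrix.mul_nonsing_inv_cancel_right _ _
      (isUnit_iff_isUnit_det _ |>.mp hSig.isUnit)]
  calc (P * Φᵀ * Khat * W + Lt) *ᵥ Sig⁻¹ *ᵥ z
      = ((P * Φᵀ * Khat * W + Lt) * Sig⁻¹) *ᵥ z := by rw [mulVec_mulVec]
    _ = M *ᵥ z := by rw [hLS]
    _ = (L' * Sig'⁻¹) *ᵥ z' + ((P - L' * Sig'⁻¹ * B') * Φᵀ * Kt * Φ) *ᵥ Bᵀ *ᵥ V⁻¹ *ᵥ z := by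
        rw [hMdef, add_mulVec, hLz, add_comm]
        congr 1
        simp only [mulVec_mulVec, hW, Matrix.mul_assoc]
end

section
/- Let V be an n×n real positive definite matrix, K̂ an r×r real positive definite matrix, B an n×q real matrix, and Φ an r×q real matrix; set Σ = B Φᵀ K̂ Φ Bᵀ + V and K̃ = (K̂⁻¹ + Φ Bᵀ V⁻¹ B Φᵀ)⁻¹. Let P be a p×q matrix, L̃ a p×n matrix, Σ' an invertible n'×n' matrix, L' a p×n' matrix, and B' an n'×q matrix, and assume L̃ V⁻¹ B = L' Σ'⁻¹ B' and L̃ V⁻¹ L̃ᵀ = L' Σ'⁻¹ L'ᵀ. Define L = P Φᵀ K̂ Φ Bᵀ + L̃ and B̃ = P − L' Σ'⁻¹ B'. Then L Σ⁻¹ Lᵀ = L' Σ'⁻¹ L'ᵀ + P Φᵀ K̂ Φ Pᵀ − B̃ Φᵀ K̃ Φ B̃ᵀ. -/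
set_option maxHeartbeats 1600000


open Matrix

/-- One-step recursion for the predictive covariance in the M-RA-lp: with
Σ = B Φᵀ K̂ Φ Bᵀ + V, K̃ = (K̂⁻¹ + Φ Bᵀ V⁻¹ B Φᵀ)⁻¹, Sig' invertible,
L̃ V⁻¹ B = L' Sig'⁻¹ B' and L̃ V⁻¹ L̃ᵀ = L' Sig'⁻¹ L'ᵀ, setting
L = P Φᵀ K̂ Φ Bᵀ + L̃ and B̃ = P − L' Sig'⁻¹ B', one has
L Σ⁻¹ Lᵀ = L' Sig'⁻¹ L'ᵀ + P Φᵀ K̂ Φ Pᵀ − B̃ Φᵀ K̃ Φ B̃ᵀ. -/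
theorem predictive_cov_recursion {n q r p n' : ℕ}
    (V : Matrix (Fin n) (Fin n) ℝ) (Khat : Matrix (Fin r) (Fin r) ℝ)
    (B : Matrix (Fin n) (Fin q) ℝ) (Φ : Matrix (Fin r) (Fin q) ℝ)
    (hV : V.PosDef) (hK : Khat.PosDef)
    (P : Matrix (Fin p) (Fin q) ℝ) (Lt : Matrix (Fin p) (Fin n) ℝ)
    (Sig' : Matrix (Fin n') (Fin n') ℝ) (hSig' : IsUnit Sig')
    (L' : Matrix (Fin p) (Fin n') ℝ) (B' : Matrix (Fin n') (Fin q) ℝ)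
    (hLB : Lt * V⁻¹ * B = L' * Sig'⁻¹ * B')
    (hLL : Lt * V⁻¹ * Ltᵀ = L' * Sig'⁻¹ * L'ᵀ) :
    (P * Φᵀ * Khat * (Φ * Bᵀ) + Lt) *
        (B * Φᵀ * Khat * (Φ * Bᵀ) + V)⁻¹ *
        (P * Φᵀ * Khat * (Φ * Bᵀ) + Lt)ᵀ =
      L' * Sig'⁻¹ * L'ᵀ + P * Φᵀ * Khat * (Φ * Pᵀ) -
        (P - L' * Sig'⁻¹ * B') * Φᵀ *
          (Khat⁻¹ + Φ * Bᵀ * V⁻¹ * (B * Φᵀ))⁻¹ *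
          (Φ * (P - L' * Sig'⁻¹ * B')ᵀ) := by
  have hVu : IsUnit V := hV.isUnit
  have hKu : IsUnit Khat := hK.isUnit
  have hKdet : IsUnit Khat.det := (Matrix.isUnit_iff_isUnit_det Khat).mp hKu
  have hKsymm : Khatᵀ = Khat := by
    have h : Khatᴴ = Khat := hK.isHermitian
    rwa [Matrix.conjTranspose_eq_transpose_of_trivial] at h
  have hVsymm : Vᵀ = V := by
    have h : Vᴴ = V := hV.isHermitian
    rwa [Matrix.conjTranspose_eq_transpose_of_trivial] at h
  have hVit : V⁻¹ᵀ = V⁻¹ := by rw [Matrix.transpose_nonsing_inv, hVsymm]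
  have hS : (Φ * Bᵀ * V⁻¹ * (B * Φᵀ)).PosSemidef := by
    have h1 : (Φ * Bᵀ)ᴴ = B * Φᵀ := by
      rw [Matrix.conjTranspose_eq_transpose_of_trivial, Matrix.transpose_mul,
        Matrix.transpose_transpose]
    have h := hV.inv.posSemidef.mul_mul_conjTranspose_same (Φ * Bᵀ)
    rwa [h1] at h
  have hNpd : (Khat⁻¹ + Φ * Bᵀ * V⁻¹ * (B * Φᵀ)).PosDef := hK.inv.add_posSemidef hS
  have hNu : IsUnit (Khat⁻¹ + Φ * Bᵀ * V⁻¹ * (B * Φᵀ)) := hNpd.isUnit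
  have hNalt : Khat⁻¹ + Φ * Bᵀ * V⁻¹ * (B * Φᵀ)
      = Khat⁻¹ + Φ * (Bᵀ * (V⁻¹ * (B * Φᵀ))) := by
    rw [Matrix.mul_assoc, Matrix.mul_assoc]
  have hNrdet : IsUnit (Khat⁻¹ + Φ * (Bᵀ * (V⁻¹ * (B * Φᵀ)))).det := by
    rw [← hNalt]; exact (Matrix.isUnit_iff_isUnit_det _).mp hNu
  have hK1 : ∀ x : Matrix (Fin r) (Fin p) ℝ, Khat * (Khat⁻¹ * x) = x := fun x => by
    rw [← Matrix.mul_assoc, Matrix.mul_nonsing_inv _ hKdet, Matrix.one_mul]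
  have hK2 : ∀ x : Matrix (Fin r) (Fin p) ℝ, Khat⁻¹ * (Khat * x) = x := fun x => by
    rw [← Matrix.mul_assoc, Matrix.nonsing_inv_mul _ hKdet, Matrix.one_mul]
  have hSN : ∀ x : Matrix (Fin r) (Fin p) ℝ,
      Φ * (Bᵀ * (V⁻¹ * (B * (Φᵀ * ((Khat⁻¹ + Φ * (Bᵀ * (V⁻¹ * (B * Φᵀ))))⁻¹ * x)))))
        = x - Khat⁻¹ * ((Khat⁻¹ + Φ * (Bᵀ * (V⁻¹ * (B * Φᵀ))))⁻¹ * x) := fun x => by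
    have h : (Khat⁻¹ + Φ * (Bᵀ * (V⁻¹ * (B * Φᵀ)))) *
        ((Khat⁻¹ + Φ * (Bᵀ * (V⁻¹ * (B * Φᵀ))))⁻¹ * x) = x := by
      rw [← Matrix.mul_assoc, Matrix.mul_nonsing_inv _ hNrdet, Matrix.one_mul]
    rw [Matrix.add_mul] at h
    have h2 : Φ * (Bᵀ * (V⁻¹ * (B * (Φᵀ * ((Khat⁻¹ + Φ * (Bᵀ * (V⁻¹ * (B * Φᵀ))))⁻¹ * x)))))
        = Φ * (Bᵀ * (V⁻¹ * (B * Φᵀ))) * ((Khat⁻¹ + Φ * (Bᵀ * (V⁻¹ * (B * Φᵀ))))⁻¹ * x) := by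
      simp only [Matrix.mul_assoc]
    rw [h2, eq_sub_iff_add_eq, add_comm]
    exact h
  have hNS : ∀ x : Matrix (Fin r) (Fin p) ℝ,
      (Khat⁻¹ + Φ * (Bᵀ * (V⁻¹ * (B * Φᵀ))))⁻¹ * (Φ * (Bᵀ * (V⁻¹ * (B * (Φᵀ * x)))))
        = x - (Khat⁻¹ + Φ * (Bᵀ * (V⁻¹ * (B * Φᵀ))))⁻¹ * (Khat⁻¹ * x) := fun x => by
    have h : (Khat⁻¹ + Φ * (Bᵀ * (V⁻¹ * (B * Φᵀ))))⁻¹ *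
        ((Khat⁻¹ + Φ * (Bᵀ * (V⁻¹ * (B * Φᵀ)))) * x) = x := by
      rw [← Matrix.mul_assoc, Matrix.nonsing_inv_mul _ hNrdet, Matrix.one_mul]
    rw [Matrix.add_mul, Matrix.mul_add] at h
    have h2 : Φ * (Bᵀ * (V⁻¹ * (B * Φᵀ))) * x = Φ * (Bᵀ * (V⁻¹ * (B * (Φᵀ * x)))) := by
      simp only [Matrix.mul_assoc]
    rw [h2] at h
    rw [eq_sub_iff_add_eq, add_comm]
    exact h
  have hLB' : ∀ x : Matrix (Fin q) (Fin p) ℝ,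
      Lt * (V⁻¹ * (B * x)) = L' * (Sig'⁻¹ * (B' * x)) := fun x => by
    have h : Lt * V⁻¹ * B * x = L' * Sig'⁻¹ * B' * x := by rw [hLB]
    simpa only [Matrix.mul_assoc] using h
  have hLBT : Bᵀ * (V⁻¹ * Ltᵀ) = B'ᵀ * (Sig'⁻¹ᵀ * L'ᵀ) := by
    have h := congrArg Matrix.transpose hLB
    simp only [Matrix.transpose_mul] at h
    rwa [hVit] at h
  have hLL' : Lt * (V⁻¹ * Ltᵀ) = L' * (Sig'⁻¹ * L'ᵀ) := by
    rw [← Matrix.mul_assoc, hLL, Matrix.mul_assoc]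
  rw [show B * Φᵀ * Khat * (Φ * Bᵀ) + V = V + B * Φᵀ * Khat * (Φ * Bᵀ) from add_comm _ _,
    Matrix.add_mul_mul_inv_eq_sub _ _ _ _ hVu hKu hNu]
  simp only [Matrix.transpose_add, Matrix.transpose_sub, Matrix.transpose_mul, Matrix.transpose_transpose, hKsymm,
    Matrix.mul_add, Matrix.add_mul, Matrix.mul_sub, Matrix.sub_mul, Matrix.mul_assoc,
    hK1, hK2, hSN, hNS, hLB', hLBT, hLL']
  abel
end

section
/- Let V be an n×n real positive definite matrix, K̂ an r×r real positive definite matrix, B an n×q real matrix, and Φ an r×q real matrix; set Σ = B Φᵀ K̂ Φ Bᵀ + V and K̃ = (K̂⁻¹ + Φ Bᵀ V⁻¹ B Φᵀ)⁻¹. Let P be a p×q matrix, L̃ a p×n matrix, Σ' an invertible n'×n' matrix, L' a p×n' matrix, and B' an n'×q matrix with L̃ V⁻¹ B = L' Σ'⁻¹ B'. Further let B^k be an n×q_k matrix, P^k a p×q_k matrix, and B'^k an n'×q_k matrix with L̃ V⁻¹ B^k = L' Σ'⁻¹ B'^k. Define L = P Φᵀ K̂ Φ Bᵀ + L̃ and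 B̃ = P − L' Σ'⁻¹ B'. Then P^k − L Σ⁻¹ B^k = (P^k − L' Σ'⁻¹ B'^k) − B̃ Φᵀ K̃ Φ (Bᵀ V⁻¹ B^k). -/
open Matrix

/-- One-step recursion for the auxiliary matrices B̃ in the M-RA-lp prediction
algorithm: with Σ = B Φᵀ K̂ Φ Bᵀ + V, K̃ = (K̂⁻¹ + Φ Bᵀ V⁻¹ B Φᵀ)⁻¹, Sig'
invertible, L̃ V⁻¹ B = L' Sig'⁻¹ B' and L̃ V⁻¹ B^k = L' Sig'⁻¹ B'^k, setting
L = P Φᵀ K̂ Φ Bᵀ + L̃ and B̃ = P − L' Sig'⁻¹ B', one has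
P^k − L Σ⁻¹ B^k = (P^k − L' Sig'⁻¹ B'^k) − B̃ Φᵀ K̃ Φ (Bᵀ V⁻¹ B^k). -/
theorem btilde_recursion {n q r p n' qk : ℕ}
    (V : Matrix (Fin n) (Fin n) ℝ) (Khat : Matrix (Fin r) (Fin r) ℝ)
    (B : Matrix (Fin n) (Fin q) ℝ) (Φ : Matrix (Fin r) (Fin q) ℝ)
    (hV : V.PosDef) (hK : Khat.PosDef)
    (P : Matrix (Fin p) (Fin q) ℝ) (Lt : Matrix (Fin p) (Fin n) ℝ)
    (Sig' : Matrix (Fin n') (Fin n') ℝ) (hSig' : IsUnit Sig')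
    (L' : Matrix (Fin p) (Fin n') ℝ) (B' : Matrix (Fin n') (Fin q) ℝ)
    (Bk : Matrix (Fin n) (Fin qk) ℝ) (Pk : Matrix (Fin p) (Fin qk) ℝ)
    (B'k : Matrix (Fin n') (Fin qk) ℝ)
    (hLB : Lt * V⁻¹ * B = L' * Sig'⁻¹ * B')
    (hLBk : Lt * V⁻¹ * Bk = L' * Sig'⁻¹ * B'k) :
    Pk - (P * Φᵀ * Khat * (Φ * Bᵀ) + Lt) *
        (B * Φᵀ * Khat * (Φ * Bᵀ) + V)⁻¹ * Bk =
      (Pk - L' * Sig'⁻¹ * B'k) -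
        (P - L' * Sig'⁻¹ * B') * Φᵀ *
          (Khat⁻¹ + Φ * Bᵀ * V⁻¹ * (B * Φᵀ))⁻¹ * Φ *
          (Bᵀ * V⁻¹ * Bk) := by
  classical
  set C : Matrix (Fin r) (Fin r) ℝ := Khat⁻¹ + Φ * Bᵀ * V⁻¹ * (B * Φᵀ) with hCdef
  have h2 : (Φ * Bᵀ)ᴴ = B * Φᵀ := by
    simp [conjTranspose_eq_transpose_of_trivial, transpose_mul]
  have hCpd : C.PosDef := by
    have h1 : ((Φ * Bᵀ) * V⁻¹ * (Φ * Bᵀ)ᴴ).PosSemidef :=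
      (hV.inv).posSemidef.mul_mul_conjTranspose_same (Φ * Bᵀ)
    rw [h2] at h1
    exact hK.inv.add_posSemidef h1
  have hCunit : IsUnit C := hCpd.isUnit
  have hCC : C * C⁻¹ = 1 := mul_nonsing_inv _ ((isUnit_iff_isUnit_det _).1 hCunit)
  have hKK : Khat * Khat⁻¹ = 1 := mul_nonsing_inv _ ((isUnit_iff_isUnit_det _).1 hK.isUnit)
  have hWood : (B * Φᵀ * Khat * (Φ * Bᵀ) + V)⁻¹
      = V⁻¹ - V⁻¹ * (B * Φᵀ) * C⁻¹ * (Φ * Bᵀ) * V⁻¹ := by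
    rw [add_comm]
    exact Matrix.add_mul_mul_inv_eq_sub _ _ _ _ hV.isUnit hK.isUnit hCunit
  -- the key reduction identity
  have hMid : Khat - Khat * (Φ * Bᵀ * V⁻¹ * (B * Φᵀ)) * C⁻¹ = C⁻¹ := by
    have hd : Φ * Bᵀ * V⁻¹ * (B * Φᵀ) = C - Khat⁻¹ := by rw [hCdef]; abel
    rw [hd, Matrix.mul_sub, Matrix.sub_mul, Matrix.mul_assoc Khat C C⁻¹, hCC, hKK,
      Matrix.mul_one, Matrix.one_mul]
    abel
  set Y : Matrix (Fin r) (Fin qk) ℝ := Φ * (Bᵀ * (V⁻¹ * Bk)) with hYdef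
  have g3 : Khat * (Φ * (Bᵀ * (V⁻¹ * (B * (Φᵀ * (C⁻¹ * Y)))))) = Khat * Y - C⁻¹ * Y := by
    have h := congrArg (fun M => M * Y) hMid
    simp only [Matrix.sub_mul, Matrix.mul_assoc] at h
    rw [sub_eq_iff_eq_add] at h
    rw [h]
    abel
  have f1 : Lt * (V⁻¹ * Bk) = L' * (Sig'⁻¹ * B'k) := by
    simpa only [Matrix.mul_assoc] using hLBk
  have f2 : Lt * (V⁻¹ * (B * (Φᵀ * (C⁻¹ * Y)))) =
      L' * (Sig'⁻¹ * (B' * (Φᵀ * (C⁻¹ * Y)))) := by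
    have h := congrArg (fun M => M * (Φᵀ * (C⁻¹ * Y))) hLB
    simpa only [Matrix.mul_assoc] using h
  rw [hWood]
  simp only [Matrix.add_mul, Matrix.mul_sub, Matrix.sub_mul, Matrix.mul_assoc]
  rw [f1, f2, g3]
  simp only [Matrix.mul_sub]
  abel
end
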